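/- For every integer n ≥ 0 and all real x, y: (i) for every integer a ≥ 1, β^{(a)}_{n,λ}(x+y) = Σ_{k=0}^{n} C(n,k)·[β^{(a)}_{k,λ}(x) + (k/2)·β^{(a−1)}_{k−1,λ}(x)]·E_{n−k,λ}(y), where the term (k/2)·β^{(a−1)}_{k−1,λ}(x) is interpreted as 0 when k = 0; and (ii) for every integer b ≥ 1, E^{(b)}_{n,λ}(x+y) = Σ_{k=0}^{n} C(n,k)·(2/(k+1))·β_{n−k,λ}(x)·(E^{(b−1)}_{k+1,λ}(y) − E^{(b)}_{k+1,λ}(y)). -/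

import Mathlib

/-!
Both identities are identities of exponential generating functions. Since
`e_λ^x(t) e_λ^y(t) = e_λ^{x+y}(t)` (a Vandermonde identity for degenerate falling factorials), the
generating function of `β^{(a)}(x + y)` is `t^a e_λ^x / (e_λ - 1)^a · e_λ^y`; splitting
`e_λ^y = (1 + (e_λ - 1)/2) · 2e_λ^y/(e_λ + 1)` gives (i). For (ii), write `2^b e_λ^{x+y}/(e_λ + 1)^b` as
`t e_λ^x/(e_λ - 1)` times `(1/t) · 2^b e_λ^y (e_λ - 1)/(e_λ + 1)^b`, and
`(e_λ - 1)/(e_λ + 1)^b = 1/(e_λ + 1)^{b-1} - 2/(e_λ + 1)^b`; dividing by `t` produces the factor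
`2/(k+1)`. Coefficients of a product of exponential generating functions are binomial convolutions.
-/

open Finset PowerSeries

noncomputable def dff (lam x : ℝ) (n : ℕ) : ℝ := ∏ i ∈ Finset.range n, (x - i * lam)

noncomputable def degExp (lam x : ℝ) : PowerSeries ℝ :=
  PowerSeries.mk fun k => dff lam x k / k.factorial

namespace PowerSeries

noncomputable def egf (f : ℕ → ℝ) : ℝ⟦X⟧ := mk fun n => f n / n.factorial

theorem egf_injective : Function.Injective egf := by
  intro f g h
  funext n
  simpa [egf, Nat.factorial_ne_zero] using congrArg (coeff n) h

@[simp]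
theorem constantCoeff_egf (f : ℕ → ℝ) : constantCoeff (egf f) = f 0 := by
  simp [egf]

theorem egf_add (f g : ℕ → ℝ) : egf (f + g) = egf f + egf g := by
  ext n
  simp [egf, add_div]

theorem egf_sub (f g : ℕ → ℝ) : egf (f - g) = egf f - egf g := by
  ext n
  simp [egf, sub_div]

theorem C_mul_egf (c : ℝ) (f : ℕ → ℝ) : C c * egf f = egf (c • f) := by
  ext n
  simp [egf, mul_div_assoc]

theorem X_mul_egf (f : ℕ → ℝ) : X * egf f = egf fun n => n * f (n - 1) := by
  ext (_ | n)
  · simp [egf]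
  · rw [coeff_succ_X_mul]
    simp only [egf, coeff_mk, Nat.factorial_succ, Nat.add_sub_cancel]
    push_cast
    field_simp

theorem egf_mul (f g : ℕ → ℝ) :
    egf f * egf g = egf fun n => ∑ k ∈ range (n + 1), n.choose k * f k * g (n - k) := by
  ext n
  simp only [coeff_mul, egf, coeff_mk, Nat.sum_antidiagonal_eq_sum_range_succ_mk, sum_div]
  refine sum_congr rfl fun k hk => ?_
  rw [Nat.cast_choose ℝ (Nat.lt_succ_iff.mp (mem_range.mp hk))]
  field_simp

end PowerSeries

theorem dff_succ (lam x : ℝ) (n : ℕ) : dff lam x (n + 1) = dff lam x n * (x - n * lam) :=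
  prod_range_succ _ _

theorem dff_add (lam x y : ℝ) (n : ℕ) :
    dff lam (x + y) n
      = ∑ ij ∈ antidiagonal n, n.choose ij.1 * (dff lam x ij.1 * dff lam y ij.2) := by
  induction n with
  | zero => simp [dff]
  | succ n ih =>
    rw [sum_antidiagonal_choose_succ_mul (fun i j => dff lam x i * dff lam y j), dff_succ, ih,
      sum_mul, ← sum_add_distrib]
    refine sum_congr rfl fun ij hij => ?_
    have hn : (n : ℝ) = ij.1 + ij.2 := by exact_mod_cast (mem_antidiagonal.mp hij).symm
    rw [Nat.choose_symm_of_eq_add (mem_antidiagonal.mp hij).symm, dff_succ, dff_succ, hn]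
    ring

theorem degExp_eq_egf (lam x : ℝ) : degExp lam x = egf (dff lam x) := rfl

theorem degExp_add (lam x y : ℝ) : degExp lam (x + y) = degExp lam x * degExp lam y := by
  rw [degExp_eq_egf, degExp_eq_egf, degExp_eq_egf, egf_mul]
  congr 1
  funext n
  rw [dff_add, Nat.sum_antidiagonal_eq_sum_range_succ_mk]
  simp only [mul_assoc]

@[simp]
theorem constantCoeff_degExp (lam x : ℝ) : constantCoeff (degExp lam x) = 1 := by
  simp [degExp_eq_egf, dff]

theorem degExp_one_sub_one_ne_zero (lam : ℝ) : degExp lam 1 - 1 ≠ 0 := by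
  intro h
  simpa [degExp, dff, coeff_one] using congrArg (coeff 1) h

theorem degExp_one_add_one_ne_zero (lam : ℝ) : degExp lam 1 + 1 ≠ 0 := by
  intro h
  simpa using congrArg constantCoeff h

def IsHigherDegBernoulli (lam : ℝ) (B : ℕ → ℝ → ℕ → ℝ) : Prop :=
  ∀ m x, egf (B m x) * (degExp lam 1 - 1) ^ m = X ^ m * degExp lam x

def IsHigherDegEuler (lam : ℝ) (E : ℕ → ℝ → ℕ → ℝ) : Prop :=
  ∀ m x, egf (E m x) * (degExp lam 1 + 1) ^ m = 2 ^ m * degExp lam x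

section GeneratingFunctions

variable {lam : ℝ} {B E : ℕ → ℝ → ℕ → ℝ}

theorem IsHigherDegEuler.apply_zero (hE : IsHigherDegEuler lam E) (m : ℕ) (x : ℝ) :
    E m x 0 = 1 := by
  have h := congrArg constantCoeff (hE m x)
  simp only [map_mul, map_pow, map_add, map_ofNat, constantCoeff_egf, constantCoeff_degExp,
    map_one] at h
  norm_num at h
  exact h

theorem egf_degBernoulli_add (hB : IsHigherDegBernoulli lam B) (hE : IsHigherDegEuler lam E)
    (a : ℕ) (x y : ℝ) :
    egf (B (a + 1) (x + y))
      = egf (fun k => B (a + 1) x k + k / 2 * B a x (k - 1)) * egf (E 1 y) := by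
  have hsplit : egf (fun k => B (a + 1) x k + k / 2 * B a x (k - 1))
      = egf (B (a + 1) x) + C (1 / 2) * (X * egf (B a x)) := by
    rw [X_mul_egf, C_mul_egf, ← egf_add]
    congr 1
    funext k
    simp only [Pi.add_apply, Pi.smul_apply, smul_eq_mul]
    ring
  have hhalf : C (1 / 2 : ℝ) * 2 = 1 := by
    rw [← map_ofNat C 2, ← map_mul]
    norm_num
  refine mul_right_cancel₀ (mul_ne_zero (pow_ne_zero (a + 1) (degExp_one_sub_one_ne_zero lam))
    (degExp_one_add_one_ne_zero lam)) ?_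
  rw [hsplit]
  set F := degExp lam 1
  linear_combination (F + 1) * hB (a + 1) (x + y) - egf (E 1 y) * (F + 1) * hB (a + 1) x
    - C (1 / 2) * X * (F - 1) * egf (E 1 y) * (F + 1) * hB a x
    - (X ^ (a + 1) * degExp lam x + C (1 / 2) * X ^ (a + 1) * (F - 1) * degExp lam x) * hE 1 y
    + X ^ (a + 1) * (F + 1) * degExp_add lam x y
    - X ^ (a + 1) * degExp lam x * degExp lam y * (F - 1) * hhalf

theorem egf_degEuler_add (hB : IsHigherDegBernoulli lam B) (hE : IsHigherDegEuler lam E)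
    (b : ℕ) (x y : ℝ) :
    egf (E (b + 1) (x + y))
      = egf (fun k => 2 / (k + 1) * (E b y (k + 1) - E (b + 1) y (k + 1))) * egf (B 1 x) := by
  have hshift : X * egf (fun k => 2 / (k + 1) * (E b y (k + 1) - E (b + 1) y (k + 1)))
      = 2 * (egf (E b y) - egf (E (b + 1) y)) := by
    rw [X_mul_egf, ← egf_sub, ← map_ofNat C 2, C_mul_egf]
    congr 1
    funext k
    rcases k with _ | k
    · simp [hE.apply_zero]
    · simp only [Pi.smul_apply, Pi.sub_apply, smul_eq_mul, Nat.add_sub_cancel]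
      push_cast
      field_simp
  refine mul_right_cancel₀ (mul_ne_zero X_ne_zero (mul_ne_zero (degExp_one_sub_one_ne_zero lam)
    (pow_ne_zero (b + 1) (degExp_one_add_one_ne_zero lam)))) ?_
  set F := degExp lam 1
  linear_combination X * (F - 1) * hE (b + 1) (x + y)
    - egf (B 1 x) * (F - 1) * (F + 1) ^ (b + 1) * hshift
    - 2 * (egf (E b y) - egf (E (b + 1) y)) * (F + 1) ^ (b + 1) * hB 1 x
    - 2 * X * degExp lam x * (F + 1) * hE b y + 2 * X * degExp lam x * hE (b + 1) y
    + X * 2 ^ (b + 1) * (F - 1) * degExp_add lam x y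

end GeneratingFunctions

theorem stmt19_general (lam : ℝ)
    (B E : ℕ → ℝ → ℕ → ℝ)
    (hB : ∀ m x, (PowerSeries.mk fun n => B m x n / n.factorial) * (degExp lam 1 - 1) ^ m
        = (PowerSeries.X : PowerSeries ℝ) ^ m * degExp lam x)
    (hE : ∀ m x, (PowerSeries.mk fun n => E m x n / n.factorial) * (degExp lam 1 + 1) ^ m
        = (2 : PowerSeries ℝ) ^ m * degExp lam x)
    (n : ℕ) (x y : ℝ) :
    (∀ a : ℕ, 1 ≤ a →
      B a (x + y) n = ∑ k ∈ Finset.range (n + 1), (n.choose k : ℝ)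
        * (B a x k + (k : ℝ) / 2 * B (a - 1) x (k - 1)) * E 1 y (n - k))
    ∧ (∀ b : ℕ, 1 ≤ b →
      E b (x + y) n = ∑ k ∈ Finset.range (n + 1), (n.choose k : ℝ) * (2 / ((k : ℝ) + 1))
        * B 1 x (n - k) * (E (b - 1) y (k + 1) - E b y (k + 1))) := by
  constructor
  · intro a ha
    obtain ⟨a, rfl⟩ := Nat.exists_eq_add_of_le' ha
    rw [Nat.add_sub_cancel]
    exact congrFun (egf_injective ((egf_degBernoulli_add hB hE a x y).trans (egf_mul _ _))) n
  · intro b hb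
    obtain ⟨b, rfl⟩ := Nat.exists_eq_add_of_le' hb
    rw [Nat.add_sub_cancel, congrFun (egf_injective ((egf_degEuler_add hB hE b x y).trans
      (egf_mul _ _))) n]
    exact sum_congr rfl fun k _ => by ring

theorem stmt19 (lam : ℝ) (hlam : lam ≠ 0)
    (B E : ℕ → ℝ → ℕ → ℝ)
    (hB : ∀ m x, (PowerSeries.mk fun n => B m x n / n.factorial) * (degExp lam 1 - 1) ^ m
        = (PowerSeries.X : PowerSeries ℝ) ^ m * degExp lam x)
    (hE : ∀ m x, (PowerSeries.mk fun n => E m x n / n.factorial) * (degExp lam 1 + 1) ^ m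
        = (2 : PowerSeries ℝ) ^ m * degExp lam x)
    (n : ℕ) (x y : ℝ) :
    (∀ a : ℕ, 1 ≤ a →
      B a (x + y) n = ∑ k ∈ Finset.range (n + 1), (n.choose k : ℝ)
        * (B a x k + (k : ℝ) / 2 * B (a - 1) x (k - 1)) * E 1 y (n - k))
    ∧ (∀ b : ℕ, 1 ≤ b →
      E b (x + y) n = ∑ k ∈ Finset.range (n + 1), (n.choose k : ℝ) * (2 / ((k : ℝ) + 1))
        * B 1 x (n - k) * (E (b - 1) y (k + 1) - E b y (k + 1))) :=
  stmt19_general lam B E hB hE n x y
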